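/- For every 1 ≤ i ≤ n, the product of the first i commuting elements J_1 J_2 ⋯ J_i equals (X T_{n-1} T_{n-2} ⋯ T_i)^i, where X := T_0 T_1 ⋯ T_n and J_k := (T_{k-1}^{-1} ⋯ T_1^{-1})(T_0 T_1 ⋯ T_n)(T_{n-1} ⋯ T_k); in particular J_1 J_2 ⋯ J_n = X^n. -/

import Mathlib

/-- The ordered product `T a * T (a+1) * ⋯ * T b` (equal to `1` when `b < a`). -/
def upProd {G : Type*} [Monoid G] (T : ℕ → G) (a b : ℕ) : G :=
  ((List.range (b + 1 - a)).map fun k => T (a + k)).prod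

/-- The ordered product `T b * T (b-1) * ⋯ * T a` (equal to `1` when `b < a`). -/
def downProd {G : Type*} [Monoid G] (T : ℕ → G) (b a : ℕ) : G :=
  ((List.range (b + 1 - a)).map fun k => T (b - k)).prod

/-- The element `J_k = (T_{k-1}⁻¹ ⋯ T_1⁻¹)(T_0 T_1 ⋯ T_n)(T_{n-1} ⋯ T_k)`. -/
def Jelt {G : Type*} [Group G] (T : ℕ → G) (n k : ℕ) : G :=
  downProd (fun m => (T m)⁻¹) (k - 1) 1 * upProd T 0 n * downProd T (n - 1) k

/-!
Write `X = T₀ T₁ ⋯ Tₙ` and `Yₖ = X Tₙ₋₁ ⋯ Tₖ`. The braid and far-commutation relations give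
`X Tₗ X⁻¹ = Tₗ₊₁` for `1 ≤ l ≤ n - 2`, and `Tₙ₋₁ ⋯ Tₖ` commutes with `Tₗ` for `l + 2 ≤ k`, so
`Yₖ` shifts `T₁, …, Tₖ₋₂` up by one. Moving the `T`'s through the `Y`'s then gives
`(Yᵢ₊₁ Tᵢ)^i = Yᵢ₊₁^i T₁ ⋯ Tᵢ`, while `Jᵢ₊₁ = (T₁ ⋯ Tᵢ)⁻¹ Yᵢ₊₁` and `Yᵢ = Yᵢ₊₁ Tᵢ`; hence
`J₁ ⋯ Jᵢ₊₁ = Yᵢ^i Jᵢ₊₁ = Yᵢ₊₁^(i+1)` by induction on `i`; finally `Yₙ = X`.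
-/

section Monoid

variable {G : Type*} [Monoid G] (T : ℕ → G)

lemma upProd_eq_one_of_lt {a b : ℕ} (h : b < a) : upProd T a b = 1 := by
  simp [upProd, Nat.sub_eq_zero_of_le h]

lemma upProd_self (a : ℕ) : upProd T a a = T a := by
  simp [upProd]

lemma upProd_succ {a b : ℕ} (h : a ≤ b + 1) :
    upProd T a (b + 1) = upProd T a b * T (b + 1) := by
  rw [upProd, show b + 1 + 1 - a = b + 1 - a + 1 by omega, List.range_succ, List.map_append,
    List.prod_append, List.map_singleton, List.prod_singleton, show a + (b + 1 - a) = b + 1 by omega]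
  rfl

lemma upProd_split {a b c : ℕ} (hac : a ≤ c) (hcb : c ≤ b) :
    upProd T a b = upProd T a c * upProd T (c + 1) b := by
  induction b, hcb using Nat.le_induction with
  | base => rw [upProd_eq_one_of_lt T (Nat.lt_succ_self c), mul_one]
  | succ b _ ih => rw [upProd_succ T (by omega), ih, upProd_succ T (by omega), mul_assoc]

lemma downProd_eq_one_of_lt {a b : ℕ} (h : b < a) : downProd T b a = 1 := by
  simp [downProd, Nat.sub_eq_zero_of_le h]

lemma downProd_self (a : ℕ) : downProd T a a = T a := by
  simp [downProd]

lemma downProd_succ {a b : ℕ} (h : a ≤ b + 1) :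
    downProd T (b + 1) a = T (b + 1) * downProd T b a := by
  rw [downProd, show b + 1 + 1 - a = b + 1 - a + 1 by omega, List.range_succ_eq_map,
    List.map_cons, List.prod_cons, List.map_map, Nat.sub_zero]
  congr 2
  exact List.map_congr_left fun k _ => congrArg T (Nat.add_sub_add_right b 1 k)

lemma downProd_eq_mul {a b : ℕ} (h : a ≤ b) :
    downProd T b a = downProd T b (a + 1) * T a := by
  rw [downProd, show b + 1 - a = b + 1 - (a + 1) + 1 by omega, List.range_succ, List.map_append,
    List.prod_append, List.map_singleton, List.prod_singleton,
    show b - (b + 1 - (a + 1)) = a by omega]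
  rfl

lemma commute_upProd {c : G} {a b : ℕ} (h : ∀ l, a ≤ l → l ≤ b → Commute c (T l)) :
    Commute c (upProd T a b) :=
  Commute.list_prod_right _ _ fun _ hx => by
    obtain ⟨k, hk, rfl⟩ := List.mem_map.1 hx
    have := List.mem_range.1 hk
    exact h _ (by omega) (by omega)

lemma commute_downProd {c : G} {a b : ℕ} (h : ∀ l, a ≤ l → l ≤ b → Commute c (T l)) :
    Commute c (downProd T b a) :=
  Commute.list_prod_right _ _ fun _ hx => by
    obtain ⟨k, hk, rfl⟩ := List.mem_map.1 hx
    have := List.mem_range.1 hk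
    exact h _ (by omega) (by omega)

lemma semiconjBy_upProd {Y : G} {a b : ℕ}
    (h : ∀ l, a ≤ l → l ≤ b → SemiconjBy Y (T l) (T (l + 1))) :
    SemiconjBy Y (upProd T a b) (upProd T (a + 1) (b + 1)) := by
  rcases lt_or_ge b a with hba | hab
  · rw [upProd_eq_one_of_lt T hba, upProd_eq_one_of_lt T (by omega)]
    exact SemiconjBy.one_right Y
  induction b, hab using Nat.le_induction with
  | base => simpa only [upProd_self] using h a le_rfl le_rfl
  | succ b _ ih =>
    rw [upProd_succ T (by omega), upProd_succ T (by omega)]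
    exact (ih fun l h₁ h₂ => h l h₁ (by omega)).mul_right (h (b + 1) (by omega) le_rfl)

lemma mul_pow_succ_eq_pow_mul_upProd {Y : G} {a : ℕ} (m : ℕ)
    (h : ∀ l, a ≤ l → l < a + m → SemiconjBy Y (T l) (T (l + 1))) :
    (Y * T (a + m)) ^ (m + 1) = Y ^ (m + 1) * upProd T a (a + m) := by
  induction m generalizing a with
  | zero => rw [zero_add, pow_one, pow_one, add_zero, upProd_self]
  | succ m ih =>
    have hY : Y * upProd T a (a + m) = upProd T (a + 1) (a + 1 + m) * Y := by
      rw [add_right_comm]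
      exact semiconjBy_upProd T fun l h₁ h₂ => h l h₁ (by omega)
    calc (Y * T (a + (m + 1))) ^ (m + 1 + 1)
        = Y ^ (m + 1) * (upProd T (a + 1) (a + 1 + m) * Y) * T (a + m + 1) := by
          rw [pow_succ, show a + (m + 1) = a + 1 + m by omega,
            ih fun l h₁ h₂ => h l (by omega) (by omega), add_right_comm a 1 m]
          simp only [mul_assoc]
      _ = Y ^ (m + 1 + 1) * (upProd T a (a + m) * T (a + m + 1)) := by
          rw [← hY]
          simp only [pow_succ, mul_assoc]
      _ = Y ^ (m + 1 + 1) * upProd T a (a + (m + 1)) := by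
          rw [← upProd_succ T (by omega), add_assoc a m 1]

end Monoid

section Group

variable {G : Type*} [Group G] (T : ℕ → G)

lemma inv_upProd {a b : ℕ} (hab : a ≤ b) :
    (upProd T a b)⁻¹ = downProd (fun m => (T m)⁻¹) b a := by
  induction b, hab using Nat.le_induction with
  | base => rw [upProd_self, downProd_self]
  | succ b _ ih => rw [upProd_succ T (by omega), mul_inv_rev, ih, downProd_succ _ (by omega)]

lemma Jelt_succ {n i : ℕ} (hi : 1 ≤ i) :
    Jelt T n (i + 1) = (upProd T 1 i)⁻¹ * (upProd T 0 n * downProd T (n - 1) (i + 1)) := by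
  rw [Jelt, Nat.add_sub_cancel, inv_upProd T hi, mul_assoc]

variable {n : ℕ}
  (hbraid : ∀ i, 1 ≤ i → i ≤ n - 2 → T i * T (i + 1) * T i = T (i + 1) * T i * T (i + 1))
  (hcomm : ∀ i j, i ≤ n → j ≤ n → i + 2 ≤ j → T i * T j = T j * T i)
include hbraid hcomm

lemma semiconjBy_upProd_zero {p : ℕ} (hp : 1 ≤ p) (hpn : p + 2 ≤ n) :
    SemiconjBy (upProd T 0 n) (T p) (T (p + 1)) := by
  obtain ⟨q, rfl⟩ : ∃ q, p = q + 1 := ⟨p - 1, by omega⟩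
  have hsplit : upProd T 0 n = upProd T 0 q * (T (q + 1) * T (q + 2)) * upProd T (q + 3) n := by
    rw [upProd_split T (Nat.zero_le (q + 2)) (by omega), upProd_succ T (by omega),
      upProd_succ T (by omega)]
    simp only [mul_assoc]
  have hleft : SemiconjBy (upProd T 0 q) (T (q + 2)) (T (q + 2)) :=
    (commute_upProd T fun l _ hl => (hcomm l (q + 2) (by omega) (by omega) (by omega)).symm).symm
  have hmiddle : SemiconjBy (T (q + 1) * T (q + 2)) (T (q + 1)) (T (q + 2)) := by
    rw [SemiconjBy, ← mul_assoc]
    exact hbraid (q + 1) hp (by omega)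
  have hright : SemiconjBy (upProd T (q + 3) n) (T (q + 1)) (T (q + 1)) :=
    (commute_upProd T fun l hl hln => hcomm (q + 1) l (by omega) hln (by omega)).symm
  rw [hsplit]
  exact (hleft.mul_left hmiddle).mul_left hright

lemma semiconjBy_upProd_zero_mul_downProd {k l : ℕ} (hl : 1 ≤ l) (hlk : l + 2 ≤ k) (hkn : k ≤ n) :
    SemiconjBy (upProd T 0 n * downProd T (n - 1) k) (T l) (T (l + 1)) :=
  (semiconjBy_upProd_zero T hbraid hcomm hl (by omega)).mul_left
    (commute_downProd T fun j hj hjn => hcomm l j (by omega) (by omega) (by omega)).symm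

lemma prod_Jelt_range_succ {i : ℕ} (hin : i + 1 ≤ n) :
    ((List.range (i + 1)).map fun m => Jelt T n (m + 1)).prod =
      (upProd T 0 n * downProd T (n - 1) (i + 1)) ^ (i + 1) := by
  induction i with
  | zero =>
    rw [List.range_one, List.map_singleton, List.prod_singleton, pow_one, Jelt,
      downProd_eq_one_of_lt _ Nat.zero_lt_one, one_mul]
  | succ i ih =>
    set Y := upProd T 0 n * downProd T (n - 1) (i + 2)
    have hYT : upProd T 0 n * downProd T (n - 1) (i + 1) = Y * T (1 + i) := by
      rw [downProd_eq_mul T (by omega), ← mul_assoc, add_comm 1 i]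
    have hpow : (Y * T (1 + i)) ^ (i + 1) = Y ^ (i + 1) * upProd T 1 (1 + i) :=
      mul_pow_succ_eq_pow_mul_upProd T i fun l hl hli =>
        semiconjBy_upProd_zero_mul_downProd T hbraid hcomm hl (by omega) (by omega)
    rw [List.range_succ, List.map_append, List.prod_append, List.map_singleton,
      List.prod_singleton, ih (by omega), hYT, hpow, Jelt_succ T (by omega), add_comm 1 i,
      mul_assoc, mul_inv_cancel_left, ← pow_succ]

end Group

theorem J_partial_products_general {G : Type*} [Group G] (n : ℕ) (T : ℕ → G)
    (hbraid : ∀ i, 1 ≤ i → i ≤ n - 2 →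
      T i * T (i + 1) * T i = T (i + 1) * T i * T (i + 1))
    (hcomm : ∀ i j, i ≤ n → j ≤ n → i + 2 ≤ j → T i * T j = T j * T i) :
    (∀ i, 1 ≤ i → i ≤ n →
      ((List.range i).map fun m => Jelt T n (m + 1)).prod =
        (upProd T 0 n * downProd T (n - 1) i) ^ i) ∧
    ((List.range n).map fun m => Jelt T n (m + 1)).prod = (upProd T 0 n) ^ n := by
  constructor
  · intro i hi hin
    obtain ⟨i, rfl⟩ : ∃ j, i = j + 1 := ⟨i - 1, by omega⟩
    exact prod_Jelt_range_succ T hbraid hcomm hin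
  · rcases n with _ | n
    · simp
    · rw [prod_Jelt_range_succ T hbraid hcomm le_rfl, downProd_eq_one_of_lt T (by omega), mul_one]

/-- In the affine braid group of type `C⁽¹⁾`, for `1 ≤ i ≤ n` one has
`J_1 J_2 ⋯ J_i = (X T_{n-1} ⋯ T_i)^i` where `X = T_0 T_1 ⋯ T_n`; in particular
`J_1 ⋯ J_n = X^n`. -/
theorem J_partial_products {G : Type*} [Group G] (n : ℕ) (hn : 2 ≤ n) (T : ℕ → G)
    (hbraid : ∀ i, 1 ≤ i → i ≤ n - 2 →
      T i * T (i + 1) * T i = T (i + 1) * T i * T (i + 1))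
    (hcomm : ∀ i j, i ≤ n → j ≤ n → i + 2 ≤ j → T i * T j = T j * T i)
    (hC0 : T 1 * T 0 * T 1 * T 0 = T 0 * T 1 * T 0 * T 1)
    (hCn : T (n - 1) * T n * T (n - 1) * T n = T n * T (n - 1) * T n * T (n - 1)) :
    (∀ i, 1 ≤ i → i ≤ n →
      ((List.range i).map fun m => Jelt T n (m + 1)).prod =
        (upProd T 0 n * downProd T (n - 1) i) ^ i) ∧
    ((List.range n).map fun m => Jelt T n (m + 1)).prod = (upProd T 0 n) ^ n :=
  J_partial_products_general n T hbraid hcomm
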